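/- An integer q is properly represented by some binary quadratic form of discriminant D if and only if D is a square modulo 4q. -/

import Mathlib

/-!
If `u x + v y = 1`, the unimodular substitution `(X, Y) ↦ (x X - v Y, y X + u Y)` sends `(1, 0)`
to `(x, y)`, so it turns a form properly representing `q` at `(x, y)` into an equivalent form
`q X² + b X Y + c Y²` of the same discriminant; hence `D = b² - 4 q c`. Conversely, if
`D = b² - 4 q c`, the form `q X² + b X Y + c Y²` represents `q` at `(1, 0)`.
-/

section CommRing

variable {R : Type*} [CommRing R]

/-- The left side is the discriminant of `F(x X - v Y, y X + u Y)` for `F = A X² + B X Y + C Y²`: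
its coefficients are `F(x, y)`, the displayed middle one and `F(-v, u)`. -/
theorem sq_sub_four_mul_eq_det_sq_mul_discr (A B C x y u v : R) :
    (2 * A * x * (-v) + B * (x * u + y * (-v)) + 2 * C * y * u) ^ 2 -
        4 * (A * x ^ 2 + B * x * y + C * y ^ 2) * (A * v ^ 2 - B * v * u + C * u ^ 2) =
      (u * x + v * y) ^ 2 * (B ^ 2 - 4 * A * C) := by
  ring

theorem exists_sq_sub_four_mul_eq_discr_of_isCoprime {x y : R} (hxy : IsCoprime x y)
    (A B C : R) :
    ∃ b c : R, b ^ 2 - 4 * (A * x ^ 2 + B * x * y + C * y ^ 2) * c = B ^ 2 - 4 * A * C := by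
  obtain ⟨u, v, huv⟩ := hxy
  refine ⟨_, _, sq_sub_four_mul_eq_det_sq_mul_discr A B C x y u v |>.trans ?_⟩
  rw [huv, one_pow, one_mul]

theorem exists_isCoprime_form_eq_iff (q D : R) :
    (∃ A B C x y : R, B ^ 2 - 4 * A * C = D ∧ IsCoprime x y ∧
        A * x ^ 2 + B * x * y + C * y ^ 2 = q) ↔
      ∃ b c : R, b ^ 2 - 4 * q * c = D := by
  constructor
  · rintro ⟨A, B, C, x, y, rfl, hxy, rfl⟩
    exact exists_sq_sub_four_mul_eq_discr_of_isCoprime hxy A B C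
  · rintro ⟨b, c, rfl⟩
    exact ⟨q, b, c, 1, 0, rfl, isCoprime_one_left, by ring⟩

end CommRing

theorem stmt_17_general (q D : ℤ) :
    (∃ A B C x y : ℤ, B ^ 2 - 4 * A * C = D ∧ IsCoprime x y ∧
        A * x ^ 2 + B * x * y + C * y ^ 2 = q) ↔
      ∃ z : ℤ, z ^ 2 ≡ D [ZMOD 4 * q] := by
  rw [exists_isCoprime_form_eq_iff]
  simp only [Int.modEq_iff_dvd, dvd_def]
  constructor
  · rintro ⟨b, c, rfl⟩
    exact ⟨b, -c, by ring⟩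
  · rintro ⟨z, c, hc⟩
    exact ⟨z, -c, by linear_combination -hc⟩

theorem stmt_17 (q D : ℤ) (hq : q ≠ 0) :
    (∃ A B C x y : ℤ, B ^ 2 - 4 * A * C = D ∧ IsCoprime x y ∧
        A * x ^ 2 + B * x * y + C * y ^ 2 = q) ↔
      ∃ z : ℤ, z ^ 2 ≡ D [ZMOD 4 * q] :=
  stmt_17_general q D
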